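/- Fix integers b ≥ 2 and c with 0 < c < 3b - 3, with b odd. Then the total number of fixed points of S_{[c,b]} equals (1/2)·r₂(b² - 4c + 1) + |F^(1)_{[c,b]}|. -/

import Mathlib

/-!
A fixed point `a` of `S_{[c,b]}` with `c > 0` is at least `b`, and a number with three or more
digits loses at least `3b - 3` under the digit-square sum, so for `c < 3b - 3` the fixed points are
exactly the two-digit numbers `u * b + v` with `c + u² + v² = u * b + v`. Completing squares,
this reads `(2u - b)² + (2v - 1)² = b² - 4c + 1`. For odd `b` the right side is `2 mod 4`, so both
squares are odd and the solutions with `v ≠ 0` correspond to the representations with positive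
second coordinate, which are half of all `r₂(b² - 4c + 1)` representations. The solutions with
`v = 0` are the fixed points in `F^(1)`.
-/

/-- The augmented generalized happy function: `c` plus the sum of the squares
of the base-`b` digits of `a`. -/
def S (c b a : ℕ) : ℕ := c + ((Nat.digits b a).map (· ^ 2)).sum

/-- `r2 m` is the number of ordered pairs `(x, y) ∈ ℤ²` with `x² + y² = m`. -/
noncomputable def r2 (m : ℤ) : ℕ := Set.ncard {p : ℤ × ℤ | p.1 ^ 2 + p.2 ^ 2 = m}

open Set

def digitSqSum (b a : ℕ) : ℕ := ((Nat.digits b a).map (· ^ 2)).sum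

lemma S_eq_add_digitSqSum (c b a : ℕ) : S c b a = c + digitSqSum b a := rfl

lemma digitSqSum_of_lt {b a : ℕ} (ha : a < b) : digitSqSum b a = a ^ 2 := by
  rcases eq_or_ne a 0 with rfl | ha0
  · simp [digitSqSum]
  · simp [digitSqSum, Nat.digits_of_lt b a ha0 ha]

lemma digitSqSum_add_mul {b r : ℕ} (hb : 1 < b) (hr : r < b) (q : ℕ) :
    digitSqSum b (r + b * q) = r ^ 2 + digitSqSum b q := by
  by_cases h : r = 0 ∧ q = 0
  · simp [h.1, h.2, digitSqSum]
  · simp [digitSqSum, Nat.digits_add b hb r q hr (not_and_or.mp h)]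

lemma digitSqSum_two_digits {b u v : ℕ} (hb : 1 < b) (hu : u < b) (hv : v < b) :
    digitSqSum b (u * b + v) = u ^ 2 + v ^ 2 := by
  rw [add_comm, mul_comm, digitSqSum_add_mul hb hv, digitSqSum_of_lt hu, add_comm]

/-- Equality holds at `a = b ^ 2 + b - 1`, with digits `b - 1, 0, 1`. -/
lemma digitSqSum_add_le {b a : ℕ} (hb : 1 < b) (ha : b ^ 2 ≤ a) :
    digitSqSum b a + 3 * b ≤ a + 3 := by
  induction a using Nat.strong_induction_on with
  | _ a ih =>
  obtain ⟨r, q, hr, rfl⟩ : ∃ r q, r < b ∧ a = r + b * q :=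
    ⟨a % b, a / b, Nat.mod_lt _ (by omega), (Nat.mod_add_div a b).symm⟩
  have hq : b ≤ q := by nlinarith
  rw [digitSqSum_add_mul hb hr]
  by_cases hq2 : b ^ 2 ≤ q
  · have := ih q (by nlinarith) hq2
    nlinarith
  · obtain ⟨u, w, hu, rfl⟩ : ∃ u w, u < b ∧ q = u + b * w :=
      ⟨q % b, q / b, Nat.mod_lt _ (by omega), (Nat.mod_add_div q b).symm⟩
    have hw : 1 ≤ w := by nlinarith
    have hwb : w < b := by nlinarith
    rw [digitSqSum_add_mul hb hu, digitSqSum_of_lt hwb]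
    nlinarith [Nat.mul_le_mul_left (w - 1) (show w + 1 ≤ b ^ 2 by nlinarith)]

lemma odd_of_sq_add_sq_emod_four {x y : ℤ} (h : (x ^ 2 + y ^ 2) % 4 = 2) : Odd x ∧ Odd y := by
  rw [Int.odd_iff, Int.odd_iff, ← Int.emod_emod_of_dvd x (by norm_num : (2:ℤ) ∣ 4),
    ← Int.emod_emod_of_dvd y (by norm_num : (2:ℤ) ∣ 4)]
  rw [Int.add_emod, pow_two, pow_two, Int.mul_emod, Int.mul_emod y] at h
  have := Int.emod_nonneg x (by norm_num : (4:ℤ) ≠ 0)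
  have := Int.emod_nonneg y (by norm_num : (4:ℤ) ≠ 0)
  have := Int.emod_lt_of_pos x (by norm_num : (0:ℤ) < 4)
  have := Int.emod_lt_of_pos y (by norm_num : (0:ℤ) < 4)
  interval_cases x % 4 <;> interval_cases y % 4 <;> simp_all

lemma sq_sub_four_mul_add_one_emod_four {b : ℤ} (hb : Odd b) (c : ℤ) :
    (b ^ 2 - 4 * c + 1) % 4 = 2 := by
  have := Int.sq_mod_four_eq_one_of_odd hb
  omega

lemma sq_ne_sq_sub_four_mul_add_one {b : ℤ} (hb : Odd b) (x c : ℤ) :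
    x ^ 2 ≠ b ^ 2 - 4 * c + 1 := by
  intro h
  have h0 := (odd_of_sq_add_sq_emod_four (x := x) (y := 0)
    (by rw [zero_pow two_ne_zero, add_zero, h]; exact sq_sub_four_mul_add_one_emod_four hb c)).2
  simp at h0

lemma sq_add_sq_eq_iff {b c u v : ℤ} :
    (2 * u - b) ^ 2 + (2 * v - 1) ^ 2 = b ^ 2 - 4 * c + 1 ↔ c + u ^ 2 + v ^ 2 = u * b + v := by
  constructor <;> intro h <;> linarith

lemma finite_setOf_sq_add_sq_eq (m : ℤ) : {p : ℤ × ℤ | p.1 ^ 2 + p.2 ^ 2 = m}.Finite := by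
  refine ((finite_Icc (-m) m).prod (finite_Icc (-m) m)).subset ?_
  rintro ⟨x, y⟩ (h : x ^ 2 + y ^ 2 = m)
  simp only [mem_prod, mem_Icc]
  have := Int.le_self_sq x
  have := Int.le_self_sq (-x)
  have := Int.le_self_sq y
  have := Int.le_self_sq (-y)
  refine ⟨⟨?_, ?_⟩, ?_, ?_⟩ <;> nlinarith

lemma div_mod_two_digits {b u v : ℕ} (hv : v < b) : (u * b + v) / b = u ∧ (u * b + v) % b = v :=
  (Nat.div_mod_unique (by omega)).2 ⟨by ring, hv⟩

lemma injOn_two_digits (b : ℕ) : InjOn (fun p : ℕ × ℕ => p.1 * b + p.2) {p | p.2 < b} := by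
  rintro ⟨u, v⟩ (hv : v < b) ⟨u', v'⟩ (hv' : v' < b) (h : u * b + v = u' * b + v')
  obtain ⟨hu, hv⟩ := div_mod_two_digits (u := u) hv
  obtain ⟨hu', hv'⟩ := div_mod_two_digits (u := u') hv'
  rw [h] at hu hv
  rw [← hu, ← hv, hu', hv']

lemma r2_eq_two_mul_ncard {m : ℤ} (hm : ∀ x : ℤ, x ^ 2 ≠ m) :
    r2 m = 2 * {p : ℤ × ℤ | p.1 ^ 2 + p.2 ^ 2 = m ∧ 0 < p.2}.ncard := by
  set sols := {p : ℤ × ℤ | p.1 ^ 2 + p.2 ^ 2 = m}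
  have hneg : sols \ {p | 0 < p.2} = Prod.map id Neg.neg '' (sols ∩ {p | 0 < p.2}) := by
    ext p
    constructor
    · obtain ⟨x, y⟩ := p
      rintro ⟨h : x ^ 2 + y ^ 2 = m, hy : ¬0 < y⟩
      have hy0 : y ≠ 0 := by rintro rfl; exact hm x (by simpa using h)
      exact ⟨(x, -y), ⟨show x ^ 2 + (-y) ^ 2 = m by rwa [neg_sq], show 0 < -y by omega⟩, by simp⟩
    · rintro ⟨⟨x, y⟩, ⟨h : x ^ 2 + y ^ 2 = m, hy : 0 < y⟩, rfl⟩
      exact ⟨show x ^ 2 + (-y) ^ 2 = m by rwa [neg_sq], show ¬0 < -y by omega⟩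
  rw [r2, ← ncard_inter_add_ncard_sdiff_eq_ncard sols {p | 0 < p.2} (finite_setOf_sq_add_sq_eq m),
    hneg, ncard_image_of_injective _ (Function.injective_id.prodMap neg_injective), two_mul]
  rfl

def fixedDigitPairs (c b : ℕ) : Set (ℕ × ℕ) :=
  {p | 0 < p.1 ∧ p.1 < b ∧ p.2 < b ∧ c + p.1 ^ 2 + p.2 ^ 2 = p.1 * b + p.2}

section FixedPoints

variable {c b : ℕ}

lemma finite_fixedDigitPairs : (fixedDigitPairs c b).Finite :=
  ((finite_Iio b).prod (finite_Iio b)).subset fun _ hp => ⟨hp.2.1, hp.2.2.1⟩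

lemma S_two_digits_eq_self_iff (hb : 1 < b) {u v : ℕ} (hu : u < b) (hv : v < b) :
    S c b (u * b + v) = u * b + v ↔ c + u ^ 2 + v ^ 2 = u * b + v := by
  rw [S_eq_add_digitSqSum, digitSqSum_two_digits hb hu hv, add_assoc]

lemma le_of_S_eq_self (hc : 0 < c) {a : ℕ} (h : S c b a = a) : b ≤ a := by
  by_contra! hab
  rw [S_eq_add_digitSqSum, digitSqSum_of_lt hab] at h
  nlinarith [Nat.le_self_pow two_ne_zero a]

lemma lt_sq_of_S_eq_self (hb : 1 < b) (hc : c + 3 < 3 * b) {a : ℕ} (h : S c b a = a) :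
    a < b ^ 2 := by
  by_contra! hab
  have := digitSqSum_add_le hb hab
  rw [S_eq_add_digitSqSum] at h
  omega

lemma fixedPoints_eq_image (hb : 1 < b) (hc : 0 < c) (hc' : c + 3 < 3 * b) :
    {a : ℕ | 0 < a ∧ S c b a = a} =
      (fun p : ℕ × ℕ => p.1 * b + p.2) '' fixedDigitPairs c b := by
  ext a
  constructor
  · rintro ⟨-, h⟩
    have hba := le_of_S_eq_self hc h
    have hab := lt_sq_of_S_eq_self hb hc' h
    have hdigits : a / b * b + a % b = a := Nat.div_add_mod' a b
    have hlo : a % b < b := Nat.mod_lt a (by omega)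
    have hhi : a / b < b := Nat.div_lt_of_lt_mul (by nlinarith)
    rw [← hdigits, S_two_digits_eq_self_iff hb hhi hlo] at h
    exact ⟨(a / b, a % b), ⟨Nat.div_pos hba (by omega), hhi, hlo, h⟩, hdigits⟩
  · rintro ⟨⟨u, v⟩, ⟨hu, hub, hv, h⟩, rfl⟩
    exact ⟨by positivity, (S_two_digits_eq_self_iff hb hub hv).2 h⟩

lemma leadingDigitFixedPoints_eq_image (hb : 1 < b) :
    {a : ℕ | ∃ u : ℕ, 0 < u ∧ u < b ∧ a = u * b ∧ S c b a = a} =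
      (fun p : ℕ × ℕ => p.1 * b + p.2) '' (fixedDigitPairs c b ∩ {p | p.2 = 0}) := by
  ext a
  constructor
  · rintro ⟨u, hu, hub, rfl, h⟩
    rw [← add_zero (u * b), S_two_digits_eq_self_iff hb hub (by omega)] at h
    exact ⟨(u, 0), ⟨⟨hu, hub, by omega, h⟩, rfl⟩, rfl⟩
  · rintro ⟨⟨u, v⟩, ⟨⟨hu, hub, hv, h⟩, rfl : v = 0⟩, rfl⟩
    exact ⟨u, hu, hub, rfl, (S_two_digits_eq_self_iff hb hub hv).2 h⟩

lemma ncard_fixedDigitPairs_sdiff (hb : Odd b) (hc : 0 < c) :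
    (fixedDigitPairs c b \ {p | p.2 = 0}).ncard =
      {p : ℤ × ℤ | p.1 ^ 2 + p.2 ^ 2 = (b : ℤ) ^ 2 - 4 * c + 1 ∧ 0 < p.2}.ncard := by
  refine ncard_congr (fun p _ => (2 * (p.1 : ℤ) - b, 2 * (p.2 : ℤ) - 1)) ?_ ?_ ?_
  · rintro ⟨u, v⟩ ⟨⟨-, -, -, h⟩, hv : v ≠ 0⟩
    refine ⟨sq_add_sq_eq_iff.2 (by exact_mod_cast h), by omega⟩
  · rintro ⟨u, v⟩ ⟨u', v'⟩ - - h
    simp only [Prod.mk.injEq] at h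
    ext <;> simp only <;> omega
  · rintro ⟨x, y⟩ ⟨h : x ^ 2 + y ^ 2 = _, hy : 0 < y⟩
    have hbZ : Odd (b : ℤ) := hb.natCast
    obtain ⟨hx, hy'⟩ := odd_of_sq_add_sq_emod_four (h ▸ sq_sub_four_mul_add_one_emod_four hbZ c)
    -- the preimage is `((x + b) / 2, (y + 1) / 2)`
    obtain ⟨u, hu⟩ := hx.add_odd hbZ
    obtain ⟨v, hv⟩ := hy'.add_odd odd_one
    have hx0 : x ≠ 0 := by rintro rfl; simp at hx
    have hx2 : x ^ 2 < (b : ℤ) ^ 2 := by nlinarith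
    have hy2 : y ^ 2 < (b : ℤ) ^ 2 := by nlinarith [sq_pos_of_ne_zero hx0]
    have hxb := abs_lt_of_sq_lt_sq' hx2 (by positivity)
    have hyb := abs_lt_of_sq_lt_sq' hy2 (by positivity)
    lift u to ℕ using (by omega)
    lift v to ℕ using (by omega)
    have huv : (2 * (u : ℤ) - b) ^ 2 + (2 * (v : ℤ) - 1) ^ 2 = (b : ℤ) ^ 2 - 4 * c + 1 := by
      rwa [show 2 * (u : ℤ) - b = x by omega, show 2 * (v : ℤ) - 1 = y by omega]
    refine ⟨(u, v), ⟨⟨by omega, by omega, by omega, ?_⟩, show v ≠ 0 by omega⟩, ?_⟩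
    · exact_mod_cast sq_add_sq_eq_iff.1 huv
    · ext <;> simp only <;> omega

end FixedPoints

theorem stmt_14 (c b : ℕ) (hb : 2 ≤ b) (hodd : Odd b)
    (hc1 : 0 < c) (hc2 : c < 3 * b - 3) :
    2 * Set.ncard {a : ℕ | 0 < a ∧ S c b a = a} =
      r2 ((b : ℤ) ^ 2 - 4 * c + 1) +
        2 * Set.ncard {a : ℕ | ∃ u : ℕ, 0 < u ∧ u < b ∧ a = u * b ∧ S c b a = a} := by
  rw [fixedPoints_eq_image hb hc1 (by omega), leadingDigitFixedPoints_eq_image hb,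
    ((injOn_two_digits b).mono fun p hp => hp.2.2.1).ncard_image,
    ((injOn_two_digits b).mono fun p hp => hp.1.2.2.1).ncard_image,
    r2_eq_two_mul_ncard (sq_ne_sq_sub_four_mul_add_one hodd.natCast · c),
    ← ncard_fixedDigitPairs_sdiff hodd hc1,
    ← ncard_inter_add_ncard_sdiff_eq_ncard _ {p | p.2 = 0} finite_fixedDigitPairs]
  ring
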